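/- Let α ∈ [1/3, 1) ∪ {0}. Then for every finitely supported function u : ℕ₀ → ℝ with u(0) = 0 one has ∑_{n=1}^∞ |u(n) − u(n−1)|² n^α ≥ ((α−1)²/4) ∑_{n=1}^∞ |u(n)|² n^{α−2} + ∑_{k=3}^∞ b_k(α) ∑_{n=2}^∞ |u(n)|² n^{α−k}, where all the coefficients b_k(α) are non-negative. -/

import Mathlib

/-- The generalized binomial coefficient `binom(γ, k) = γ(γ−1)⋯(γ−k+1)/k!`. -/
noncomputable def genBinom (γ : ℝ) (k : ℕ) : ℝ :=
  (∏ i ∈ Finset.range k, (γ - i)) / (Nat.factorial k)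

/-- `b_k(α) = binom(α,k) − (−1)^k binom((1−α)/2, k) − binom((1+α)/2, k)`. -/
noncomputable def bCoef (α : ℝ) (k : ℕ) : ℝ :=
  genBinom α k - (-1) ^ k * genBinom ((1 - α) / 2) k - genBinom ((1 + α) / 2) k

/-!
Ground-state substitution with `g n = n ^ q`, `q = (1 - α) / 2`: completing a square on every edge
gives `∑ (n + 1)^α (u (n + 1) - u n)^2 ≥ ∑ V m u m ^ 2` with
`V m = (m^α (g m - g (m - 1)) + (m + 1)^α (g m - g (m + 1))) / g m`. For `m ≥ 2` and `x = 1 / m`,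
`V m = m^α (1 + (1 + x)^α - (1 - x)^q - (1 + x)^(1 - q))`, and the binomial series turns this into
exactly `q^2 m^(α - 2) + ∑_{k ≥ 3} b_k(α) m^(α - k)`; at `m = 1` one only needs `V 1 ≥ q^2`.
The sign of `b_k(α)` is that of `k! b_k(α)`, a signed combination of the products
`x (1 - x) (2 - x) ⋯ (k - 1 - x)` for `x = α, q, 1 - q`, which are compared factor by factor.
-/

open Finset

-- `absDescProd x j = |x (x - 1) ⋯ (x - j)|` when `0 ≤ x ≤ 1`
noncomputable def absDescProd (x : ℝ) (j : ℕ) : ℝ := x * ∏ i ∈ range j, ((i : ℝ) + 1 - x)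

lemma prod_range_succ_sub_eq (x : ℝ) (j : ℕ) :
    ∏ i ∈ range (j + 1), (x - i) = (-1) ^ j * absDescProd x j := by
  induction j with
  | zero => simp [absDescProd]
  | succ j ih =>
    rw [prod_range_succ, ih, absDescProd, absDescProd, prod_range_succ]
    push_cast
    ring

lemma factorial_mul_bCoef_succ (α : ℝ) (j : ℕ) :
    ((j + 1).factorial : ℝ) * bCoef α (j + 1) =
      (-1) ^ j * (absDescProd α j - absDescProd ((1 + α) / 2) j) + absDescProd ((1 - α) / 2) j := by
  have hsq : ((-1 : ℝ) ^ j) ^ 2 = 1 := by rw [← pow_mul, mul_comm, pow_mul]; norm_num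
  simp only [bCoef, genBinom, prod_range_succ_sub_eq]
  field_simp
  linear_combination (absDescProd ((1 - α) / 2) j) * hsq

lemma absDescProd_nonneg {x : ℝ} (hx0 : 0 ≤ x) (hx1 : x ≤ 1) (j : ℕ) : 0 ≤ absDescProd x j :=
  mul_nonneg hx0 (prod_nonneg fun i _ ↦ by linarith [(i.cast_nonneg : (0 : ℝ) ≤ i)])

lemma absDescProd_succ (x : ℝ) (m : ℕ) :
    absDescProd x (m + 1) = x * (1 - x) * ∏ i ∈ range m, ((i : ℝ) + 2 - x) := by
  rw [absDescProd, prod_range_succ']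
  push_cast
  ring_nf

lemma absDescProd_one_sub_le {q : ℝ} (hq0 : 0 ≤ q) (hq : q ≤ 1 / 2) (m : ℕ) :
    absDescProd (1 - q) (m + 1) ≤ absDescProd q (m + 1) := by
  rw [absDescProd_succ, absDescProd_succ, sub_sub_cancel, mul_comm (1 - q)]
  gcongr
  · exact mul_nonneg hq0 (by linarith)
  · exact fun i _ ↦ by linarith [(i.cast_nonneg : (0 : ℝ) ≤ i)]
  · linarith

lemma two_mul_prod_le_prod_of_five_le {q : ℝ} (hq0 : 0 ≤ q) (hq : q ≤ 1 / 3) {m : ℕ} (hm : 5 ≤ m) :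
    2 * (1 - 2 * q) * ∏ i ∈ range m, ((i : ℝ) + 1 + 2 * q) ≤
      (1 - q) * ∏ i ∈ range m, ((i : ℝ) + 2 - q) := by
  induction m, hm using Nat.le_induction with
  | base =>
    have h3q : 0 ≤ 1 / 3 - q := by linarith
    simp only [prod_range_succ, prod_range_zero]
    norm_num
    nlinarith [mul_nonneg hq0 h3q, mul_nonneg (pow_nonneg hq0 2) h3q, mul_nonneg (pow_nonneg hq0 3) h3q,
      mul_nonneg (pow_nonneg hq0 4) h3q, mul_nonneg (pow_nonneg hq0 5) h3q]
  | succ m _ ih =>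
    rw [prod_range_succ, prod_range_succ, ← mul_assoc, ← mul_assoc]
    gcongr ?_ * ?_
    · exact mul_nonneg (by linarith)
        (prod_nonneg fun i _ ↦ by linarith [(i.cast_nonneg : (0 : ℝ) ≤ i)])
    · linarith

lemma two_mul_prod_le_add_prod {q : ℝ} (hq0 : 0 ≤ q) (hq : q ≤ 1 / 3) {m : ℕ} (hm : 1 ≤ m) :
    2 * (1 - 2 * q) * ∏ i ∈ range m, ((i : ℝ) + 1 + 2 * q) ≤
      (1 - q) * (∏ i ∈ range m, ((i : ℝ) + 2 - q) + ∏ i ∈ range m, ((i : ℝ) + 1 + q)) := by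
  have hC : 0 ≤ (1 - q) * ∏ i ∈ range m, ((i : ℝ) + 1 + q) :=
    mul_nonneg (by linarith) (prod_nonneg fun i _ ↦ by positivity)
  have h3q : 0 ≤ 1 / 3 - q := by linarith
  rcases le_or_gt 5 m with h5 | h5
  · linarith [two_mul_prod_le_prod_of_five_le hq0 hq h5]
  · interval_cases m <;> simp only [prod_range_succ, prod_range_zero] <;> norm_num <;>
      nlinarith [mul_nonneg hq0 h3q, mul_nonneg (pow_nonneg hq0 2) h3q,
        mul_nonneg (pow_nonneg hq0 3) h3q]

lemma absDescProd_one_sub_two_mul_le {q : ℝ} (hq0 : 0 ≤ q) (hq : q ≤ 1 / 3) {m : ℕ} (hm : 1 ≤ m) :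
    absDescProd (1 - 2 * q) (m + 1) ≤ absDescProd q (m + 1) + absDescProd (1 - q) (m + 1) := by
  have hshift (c : ℝ) : ∏ i ∈ range m, ((i : ℝ) + 2 - (1 - c)) = ∏ i ∈ range m, ((i : ℝ) + 1 + c) :=
    prod_congr rfl fun i _ ↦ by ring
  rw [absDescProd_succ, absDescProd_succ, absDescProd_succ, hshift, hshift]
  nlinarith [mul_le_mul_of_nonneg_left (two_mul_prod_le_add_prod hq0 hq hm) hq0]

lemma Ico_third_one_union_zero_subset : Set.Ico (1 / 3 : ℝ) 1 ∪ {0} ⊆ Set.Ico 0 1 :=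
  Set.union_subset (Set.Ico_subset_Ico_left (by norm_num)) (by simp)

lemma bCoef_nonneg {α : ℝ} (hα : α ∈ Set.Ico (1 / 3 : ℝ) 1 ∪ {0}) {k : ℕ} (hk : 3 ≤ k) :
    0 ≤ bCoef α k := by
  obtain ⟨m, rfl⟩ : ∃ m, k = m + 1 + 1 := ⟨k - 2, by omega⟩
  obtain ⟨hα0, hα1⟩ := Ico_third_one_union_zero_subset hα
  set q := (1 - α) / 2 with hq
  have hp : (1 + α) / 2 = 1 - q := by ring
  refine (mul_nonneg_iff_of_pos_left (by positivity : (0 : ℝ) < (m + 1 + 1).factorial)).1 ?_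
  rw [factorial_mul_bCoef_succ, hp, ← hq]
  have hPα := absDescProd_nonneg hα0 hα1.le (m + 1)
  have hPq := absDescProd_nonneg (x := q) (by linarith) (by linarith) (m + 1)
  have hPp := absDescProd_nonneg (x := 1 - q) (by linarith) (by linarith) (m + 1)
  rcases Nat.even_or_odd (m + 1) with hev | hodd
  · rw [hev.neg_one_pow]
    linarith [absDescProd_one_sub_le (q := q) (by linarith) (by linarith) m]
  · rw [hodd.neg_one_pow]
    rcases hα with ⟨h1, -⟩ | h0
    · have := absDescProd_one_sub_two_mul_le (q := q) (by linarith) (by linarith)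
        (by omega : 1 ≤ m)
      rw [show 1 - 2 * q = α by ring] at this
      linarith
    · rw [Set.mem_singleton_iff.1 h0, absDescProd, zero_mul]
      linarith

open Polynomial in
lemma genBinom_eq_choose (γ : ℝ) (k : ℕ) : genBinom γ k = Ring.choose γ k := by
  have hsmeval : (descPochhammer ℤ k).smeval γ = ∏ i ∈ range k, (γ - i) := by
    rw [← descPochhammer_eval_eq_prod_range, ← descPochhammer_map (Int.castRingHom ℝ), eval_map,
      eval₂_eq_sum, smeval_eq_sum]
    simp [Polynomial.sum, Polynomial.smul_pow, zsmul_eq_mul]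
  rw [genBinom, Ring.choose_eq_smul, hsmeval, smul_eq_mul, div_eq_inv_mul]

lemma hasSum_genBinom_mul_pow (γ : ℝ) {x : ℝ} (hx : |x| < 1) :
    HasSum (fun k ↦ genBinom γ k * x ^ k) ((1 + x) ^ γ) := by
  have := (Real.one_add_rpow_hasFPowerSeriesOnBall_zero (a := γ)).hasSum (y := x)
    (by simpa [Real.enorm_eq_ofReal_abs] using hx)
  simpa [binomialSeries, FormalMultilinearSeries.coeff_ofScalars, genBinom_eq_choose, mul_comm]
    using this

lemma bCoef_zero (α : ℝ) : bCoef α 0 = -1 := by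
  simp [bCoef, genBinom]

lemma bCoef_one (α : ℝ) : bCoef α 1 = 0 := by
  simp [bCoef, genBinom]
  ring

lemma bCoef_two (α : ℝ) : bCoef α 2 = ((1 - α) / 2) ^ 2 := by
  simp [bCoef, genBinom, prod_range_succ]
  ring

lemma hasSum_bCoef_mul_pow (α : ℝ) {x : ℝ} (hx : |x| < 1) :
    HasSum (fun k ↦ bCoef α k * x ^ k)
      ((1 + x) ^ α - (1 - x) ^ ((1 - α) / 2) - (1 + x) ^ ((1 + α) / 2)) := by
  have hneg : |-x| < 1 := by rwa [abs_neg]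
  have h := ((hasSum_genBinom_mul_pow α hx).sub
    (hasSum_genBinom_mul_pow ((1 - α) / 2) hneg)).sub (hasSum_genBinom_mul_pow ((1 + α) / 2) hx)
  rw [← sub_eq_add_neg] at h
  convert h using 2 with k
  · rfl
  · rw [bCoef, neg_pow]
    ring

lemma hasSum_bCoef_add_three_mul_pow (α : ℝ) {x : ℝ} (hx : |x| < 1) :
    HasSum (fun k ↦ bCoef α (k + 3) * x ^ (k + 3))
      (1 + (1 + x) ^ α - (1 - x) ^ ((1 - α) / 2) - (1 + x) ^ ((1 + α) / 2)
        - ((1 - α) / 2) ^ 2 * x ^ 2) := by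
  have := (hasSum_nat_add_iff' 3).mpr (hasSum_bCoef_mul_pow α hx)
  simp only [sum_range_succ, sum_range_zero, bCoef_zero, bCoef_one, bCoef_two] at this
  convert this using 1 <;> first | rfl | ring

-- the potential `-(a ∇g)' / g` at the site `n + 1`
noncomputable def hardyPotential (a g : ℕ → ℝ) (n : ℕ) : ℝ :=
  (a n * (g (n + 1) - g n) + a (n + 1) * (g (n + 1) - g (n + 2))) / g (n + 1)

lemma sub_div_mul_sq_add_sub_div_mul_sq_le {r s : ℝ} (hr : 0 < r) (hs : 0 < s) (x y : ℝ) :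
    (r - s) / r * x ^ 2 + (s - r) / s * y ^ 2 ≤ (x - y) ^ 2 := by
  have hdiff : (x - y) ^ 2 - ((r - s) / r * x ^ 2 + (s - r) / s * y ^ 2) =
      (s * x - r * y) ^ 2 / (r * s) := by
    field_simp
    ring
  linarith [div_nonneg (sq_nonneg (s * x - r * y)) (mul_pos hr hs).le]

theorem sum_hardyPotential_mul_sq_le {a g u : ℕ → ℝ} (ha : ∀ n, 0 ≤ a n) (hg0 : 0 ≤ g 0)
    (hg : ∀ n, 0 < g (n + 1)) (hu0 : u 0 = 0) {N : ℕ} (huN : u N = 0) :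
    ∑ n ∈ range N, u (n + 1) ^ 2 * hardyPotential a g n ≤
      ∑ n ∈ range N, (u (n + 1) - u n) ^ 2 * a n := by
  set f : ℕ → ℝ := fun n ↦ a n * ((g n - g (n + 1)) / g n * u n ^ 2)
  have hedge : ∀ n, a n * ((g (n + 1) - g n) / g (n + 1) * u (n + 1) ^ 2) + f n ≤
      a n * (u (n + 1) - u n) ^ 2 := by
    rintro (_ | n)
    -- `g 0` may vanish; the edge at `0` is handled by `u 0 = 0` instead
    · have : (g 1 - g 0) / g 1 ≤ 1 := by rw [div_le_one (hg 0)]; linarith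
      simp only [f, hu0]
      norm_num
      exact mul_le_mul_of_nonneg_left (mul_le_of_le_one_left (sq_nonneg _) this) (ha 0)
    · rw [← mul_add]
      exact mul_le_mul_of_nonneg_left
        (sub_div_mul_sq_add_sub_div_mul_sq_le (hg _) (hg _) _ _) (ha _)
  have hshift : ∑ n ∈ range N, f (n + 1) = ∑ n ∈ range N, f n := by
    have h := (sum_range_succ' f N).symm.trans (sum_range_succ f N)
    simp only [f, hu0, huN] at h
    simpa using h
  calc ∑ n ∈ range N, u (n + 1) ^ 2 * hardyPotential a g n
      = ∑ n ∈ range N, (a n * ((g (n + 1) - g n) / g (n + 1) * u (n + 1) ^ 2) + f (n + 1)) := by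
        refine sum_congr rfl fun n _ ↦ ?_
        simp only [f, hardyPotential]
        ring
    _ = ∑ n ∈ range N, (a n * ((g (n + 1) - g n) / g (n + 1) * u (n + 1) ^ 2) + f n) := by
        rw [sum_add_distrib, sum_add_distrib, hshift]
    _ ≤ ∑ n ∈ range N, (u (n + 1) - u n) ^ 2 * a n :=
        sum_le_sum fun n _ ↦ (hedge n).trans_eq (mul_comm _ _)

lemma hardyPotential_rpow_zero {α q : ℝ} (hq : q ≠ 0) :
    hardyPotential (fun n ↦ ((n : ℝ) + 1) ^ α) (fun n ↦ (n : ℝ) ^ q) 0 =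
      1 + 2 ^ α - 2 ^ (α + q) := by
  simp only [hardyPotential]
  norm_num [Real.zero_rpow hq, Real.rpow_add]
  ring

lemma sq_le_hardyPotential_rpow_zero {α : ℝ} (hα0 : 0 ≤ α) (hα1 : α < 1) :
    ((1 - α) / 2) ^ 2 ≤
      hardyPotential (fun n ↦ ((n : ℝ) + 1) ^ α) (fun n ↦ (n : ℝ) ^ ((1 - α) / 2)) 0 := by
  rw [hardyPotential_rpow_zero (by linarith)]
  have hsq : ((2 : ℝ) ^ (α + (1 - α) / 2)) ^ 2 = 2 * 2 ^ α := by
    rw [← Real.rpow_natCast, ← Real.rpow_mul zero_le_two, Nat.cast_ofNat,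
      show (α + (1 - α) / 2) * 2 = 1 + α by ring, Real.rpow_add two_pos, Real.rpow_one]
  -- with `y = 2 ^ (α + q)` the potential is `1 - y + y ^ 2 / 2 ≥ 1 / 2 ≥ q ^ 2`
  nlinarith [sq_nonneg ((2 : ℝ) ^ (α + (1 - α) / 2) - 1)]

lemma hardyPotential_rpow_succ {α q : ℝ} (n : ℕ) :
    hardyPotential (fun n ↦ ((n : ℝ) + 1) ^ α) (fun n ↦ (n : ℝ) ^ q) (n + 1) =
      ((n : ℝ) + 2) ^ α * (1 + (1 + 1 / ((n : ℝ) + 2)) ^ α - (1 - 1 / ((n : ℝ) + 2)) ^ q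
        - (1 + 1 / ((n : ℝ) + 2)) ^ (α + q)) := by
  set m : ℝ := (n : ℝ) + 2
  have hm : 1 < m := by simp only [m]; linarith [(n.cast_nonneg : (0 : ℝ) ≤ n)]
  have h1 : 1 + 1 / m = (m + 1) / m := by field_simp
  have h2 : 1 - 1 / m = (m - 1) / m := by field_simp
  simp only [hardyPotential]
  push_cast
  rw [show (n : ℝ) + 1 + 2 = m + 1 by ring, show (n : ℝ) + 1 = m - 1 by ring, h1, h2,
    Real.div_rpow, Real.div_rpow, Real.div_rpow, Real.rpow_add, Real.rpow_add]
  · have : 0 < m ^ α := by positivity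
    have : 0 < m ^ q := by positivity
    simp only [sub_add_cancel]
    field_simp
    ring
  all_goals linarith

lemma hasSum_bCoef_mul_rpow (α : ℝ) (n : ℕ) :
    HasSum (fun k : ℕ ↦ bCoef α (k + 3) * ((n : ℝ) + 2) ^ (α - ((k : ℝ) + 3)))
      (hardyPotential (fun n ↦ ((n : ℝ) + 1) ^ α) (fun n ↦ (n : ℝ) ^ ((1 - α) / 2)) (n + 1) -
        ((1 - α) / 2) ^ 2 * ((n : ℝ) + 2) ^ (α - 2)) := by
  rw [hardyPotential_rpow_succ, show α + (1 - α) / 2 = (1 + α) / 2 by ring]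
  set m : ℝ := (n : ℝ) + 2
  have hm : 0 < m := by positivity
  have hx : |1 / m| < 1 := by
    rw [abs_of_pos (by positivity), div_lt_one hm]
    simp only [m]
    linarith [(n.cast_nonneg : (0 : ℝ) ≤ n)]
  have hpow (k : ℕ) : m ^ (α - (k : ℝ)) = m ^ α * (1 / m) ^ k := by
    rw [Real.rpow_sub hm, Real.rpow_natCast, one_div_pow, div_eq_mul_one_div]
  convert (hasSum_bCoef_add_three_mul_pow α hx).mul_left (m ^ α) using 1
  · rfl
  · ext k
    rw [show (k : ℝ) + 3 = ((k + 3 : ℕ) : ℝ) by push_cast; ring, hpow]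
    ring
  · rw [show (2 : ℝ) = ((2 : ℕ) : ℝ) by norm_num, hpow]
    ring

lemma tsum_eq_sum_range_of_forall_ge {M : Type*} [AddCommMonoid M] [TopologicalSpace M]
    {f : ℕ → M} {N : ℕ} (hf : ∀ n ≥ N, f n = 0) : ∑' n, f n = ∑ n ∈ range N, f n :=
  tsum_eq_sum fun n hn ↦ hf n (by simpa using hn)

lemma tsum_bCoef_mul_sum_eq (α : ℝ) (u : ℕ → ℝ) (N : ℕ) :
    ∑' k : ℕ, bCoef α (k + 3) * ∑ n ∈ range N, u (n + 2) ^ 2 * ((n : ℝ) + 2) ^ (α - ((k : ℝ) + 3)) =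
      ∑ n ∈ range N, u (n + 2) ^ 2 *
        (hardyPotential (fun n ↦ ((n : ℝ) + 1) ^ α) (fun n ↦ (n : ℝ) ^ ((1 - α) / 2)) (n + 1) -
          ((1 - α) / 2) ^ 2 * ((n : ℝ) + 2) ^ (α - 2)) := by
  simp only [mul_sum]
  refine (hasSum_sum fun n _ ↦ ?_).tsum_eq
  simpa only [mul_left_comm] using (hasSum_bCoef_mul_rpow α n).mul_left (u (n + 2) ^ 2)

theorem improved_weighted_hardy_sum_range {α : ℝ} (hα0 : 0 ≤ α) (hα1 : α < 1) {u : ℕ → ℝ}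
    (hu0 : u 0 = 0) {N : ℕ} (huN : u (N + 1) = 0) :
    ((1 - α) / 2) ^ 2 * ∑ n ∈ range (N + 1), u (n + 1) ^ 2 * ((n : ℝ) + 1) ^ (α - 2) +
        ∑ n ∈ range N, u (n + 2) ^ 2 *
          (hardyPotential (fun n ↦ ((n : ℝ) + 1) ^ α) (fun n ↦ (n : ℝ) ^ ((1 - α) / 2)) (n + 1) -
            ((1 - α) / 2) ^ 2 * ((n : ℝ) + 2) ^ (α - 2)) ≤
      ∑ n ∈ range (N + 1), (u (n + 1) - u n) ^ 2 * ((n : ℝ) + 1) ^ α := by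
  have hground := sum_hardyPotential_mul_sq_le (a := fun n ↦ ((n : ℝ) + 1) ^ α)
    (g := fun n ↦ (n : ℝ) ^ ((1 - α) / 2)) (fun n ↦ by positivity)
    (by simp [Real.rpow_nonneg]) (fun n ↦ by positivity) hu0 huN
  rw [sum_range_succ'] at hground
  norm_num [add_assoc] at hground
  have hshift : ∑ n ∈ range (N + 1), u (n + 1) ^ 2 * ((n : ℝ) + 1) ^ (α - 2) =
      u 1 ^ 2 + ∑ n ∈ range N, u (n + 2) ^ 2 * ((n : ℝ) + 2) ^ (α - 2) := by
    rw [sum_range_succ', add_comm]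
    norm_num [add_assoc]
  have hV0 := mul_le_mul_of_nonneg_left (sq_le_hardyPotential_rpow_zero hα0 hα1) (sq_nonneg (u 1))
  rw [hshift]
  simp only [mul_sub, sum_sub_distrib, mul_left_comm _ (((1 - α) / 2) ^ 2), ← mul_sum]
  linear_combination hground + hV0

/-- Corollary 2.5: improved weighted discrete Hardy inequality, with all the
coefficients `b_k(α)` non-negative. -/
theorem discrete_weighted_hardy_improved (α : ℝ)
    (hα : α ∈ Set.Ico (1 / 3 : ℝ) 1 ∪ {0})
    (u : ℕ → ℝ) (hsupp : ∃ N : ℕ, ∀ n ≥ N, u n = 0) (h0 : u 0 = 0) :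
    (∀ k : ℕ, 3 ≤ k → 0 ≤ bCoef α k) ∧
    ∑' n : ℕ, |u (n + 1) - u n| ^ 2 * ((n : ℝ) + 1) ^ α ≥
      (α - 1) ^ 2 / 4 * ∑' n : ℕ, |u (n + 1)| ^ 2 * ((n : ℝ) + 1) ^ (α - 2) +
      ∑' k : ℕ, bCoef α (k + 3) *
        ∑' n : ℕ, |u (n + 2)| ^ 2 * ((n : ℝ) + 2) ^ (α - ((k : ℝ) + 3)) := by
  refine ⟨fun k hk ↦ bCoef_nonneg hα hk, ?_⟩
  obtain ⟨hα0, hα1⟩ := Ico_third_one_union_zero_subset hα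
  obtain ⟨N, hN⟩ := hsupp
  have hinner (k : ℕ) : ∑' n : ℕ, u (n + 2) ^ 2 * ((n : ℝ) + 2) ^ (α - ((k : ℝ) + 3)) =
      ∑ n ∈ range N, u (n + 2) ^ 2 * ((n : ℝ) + 2) ^ (α - ((k : ℝ) + 3)) :=
    tsum_eq_sum_range_of_forall_ge fun n hn ↦ by simp [hN (n + 2) (by omega)]
  simp only [sq_abs, hinner, tsum_bCoef_mul_sum_eq]
  rw [tsum_eq_sum_range_of_forall_ge (N := N + 1) fun n hn ↦ by
      simp [hN n (by omega), hN (n + 1) (by omega)],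
    tsum_eq_sum_range_of_forall_ge (N := N + 1) fun n hn ↦ by simp [hN (n + 1) (by omega)],
    show (α - 1) ^ 2 / 4 = ((1 - α) / 2) ^ 2 by ring]
  exact improved_weighted_hardy_sum_range hα0 hα1 h0 (hN (N + 1) (by omega))
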